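/- arXiv:math/0307212 — 2 statements merged into one kernel-verified Lean document; each statement's English description precedes it below -/
import Mathlib

section
/- For any torsion-free Christoffel symbols Γ^k_{ij} (smooth and symmetric in the lower indices i, j), the derivations δ and ∇ on Ω anticommute: δ∇ + ∇δ = 0. -/
/-!
Coordinate model of the Fedosov resolution on `M = ℝ^d`, following Dolgushev,
"Covariant and equivariant formality theorems".

An element `a : Omega d` represents the exterior form with values in the formally
completed symmetric algebra of the cotangent bundle,
`a = ∑ a_{m,S}(x) y^m dx^S`, where `m` is the multi-index of exponents of the
commuting formal fibre variables `y^1, …, y^d` and `S` is the (increasingly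
ordered) set of indices of the anticommuting `dx`'s; `a m S : (Fin d → ℝ) → ℝ`
is the corresponding (smooth) coefficient.
-/

noncomputable section
open scoped BigOperators

namespace FedosovModel

/-- Multi-indices: exponents of the formal fibre variables `y`. -/
abbrev Mi (d : ℕ) := Fin d →₀ ℕ

/-- The coordinate model of `Ω(ℝ^d, 𝒮M)`: `a m S x` is the coefficient of the
monomial `y^m dx^S` (with the `dx`'s in increasing order) at the point `x`. -/
abbrev Omega (d : ℕ) := Mi d → Finset (Fin d) → (Fin d → ℝ) → ℝ

variable (d : ℕ)

/-- total `y`-degree of a multi-index -/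
def ydeg (m : Mi d) : ℕ := ∑ i, m i

/-- all coefficients are smooth functions on `ℝ^d` -/
def Smooth (a : Omega d) : Prop := ∀ m S, ContDiff ℝ (⊤ : ℕ∞) (a m S)

/-- `a` is homogeneous of exterior degree `q`, i.e. `a ∈ Ω^q` -/
def ExtDeg (q : ℕ) (a : Omega d) : Prop := ∀ m S, S.card ≠ q → a m S = 0

/-- the sign defined by `dx^i ∧ dx^S = sgn i S • dx^{S ∪ {i}}` for `i ∉ S` -/
def sgn (i : Fin d) (S : Finset (Fin d)) : ℝ :=
  (-1 : ℝ) ^ (S.filter (fun j => j < i)).card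

/-- the projection `σ(a) = a|_{y = dx = 0}` -/
def sigmaOm (a : Omega d) : (Fin d → ℝ) → ℝ := a 0 ∅

/-- a function on `ℝ^d` viewed as an element of `Ω` with no `y`- and `dx`-dependence -/
def ofFun (f : (Fin d → ℝ) → ℝ) : Omega d :=
  fun m S => if m = 0 ∧ S = ∅ then f else 0

/-- the differential `δ = dx^i ∂/∂y^i` -/
def deltaOp (a : Omega d) : Omega d := fun m S x =>
  ∑ i ∈ S, sgn d i (S.erase i) * ((m i : ℝ) + 1) *
    a (m + Finsupp.single i 1) (S.erase i) x

/-- the homotopy operator `δ⁻¹`, acting on a component of `y`-degree `p` and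
exterior degree `q` with `p + q > 0` as `(p+q)⁻¹ y^k ι(∂/∂x^k)`, and as `0`
on the component `p = q = 0`. -/
def deltaInv (a : Omega d) : Omega d := fun m S x =>
  (((ydeg d m + S.card : ℕ) : ℝ))⁻¹ *
    ∑ k : Fin d,
      if k ∉ S ∧ 1 ≤ m k then sgn d k S * a (m - Finsupp.single k 1) (insert k S) x
      else 0

/-- partial derivative `∂f/∂x^i` -/
def pd (i : Fin d) (f : (Fin d → ℝ) → ℝ) : (Fin d → ℝ) → ℝ :=
  fun x => fderiv ℝ f x (Pi.single i 1)

/-- Christoffel symbols: `Γ k i j = Γ^k_{ij}` -/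
abbrev Christoffel (d : ℕ) := Fin d → Fin d → Fin d → (Fin d → ℝ) → ℝ

def SmoothGamma (Γ : Christoffel d) : Prop := ∀ k i j, ContDiff ℝ (⊤ : ℕ∞) (Γ k i j)

def TorsionFree (Γ : Christoffel d) : Prop := ∀ k i j, Γ k i j = Γ k j i

/-- the covariant derivative `∇a = dx^i ∂a/∂x^i − dx^i Γ^k_{ij}(x) y^j ∂a/∂y^k` -/
def nablaOp (Γ : Christoffel d) (a : Omega d) : Omega d := fun m S x =>
  ∑ i ∈ S, sgn d i (S.erase i) *
    (pd d i (a m (S.erase i)) x -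
      ∑ j : Fin d, ∑ k : Fin d,
        if 1 ≤ m j then
          let m' : Mi d := m + Finsupp.single k 1 - Finsupp.single j 1
          Γ k i j x * ((m' k : ℕ) : ℝ) * a m' (S.erase i) x
        else 0)

/-- the Riemann curvature tensor
`(R_{ij})^k_l = ∂_i Γ^k_{jl} − ∂_j Γ^k_{il} + Γ^k_{im} Γ^m_{jl} − Γ^k_{jm} Γ^m_{il}` -/
def Riem (Γ : Christoffel d) (i j k l : Fin d) : (Fin d → ℝ) → ℝ := fun x =>
  pd d i (Γ k j l) x - pd d j (Γ k i l) x +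
    ∑ mm : Fin d, (Γ k i mm x * Γ mm j l x - Γ k j mm x * Γ mm i l x)

/-- the curvature operator `R·a = −(1/2) dx^i dx^j (R_{ij})^k_l y^l ∂a/∂y^k` -/
def curvAct (Γ : Christoffel d) (a : Omega d) : Omega d := fun m S x =>
  -(1/2 : ℝ) * ∑ i ∈ S, ∑ j ∈ S.erase i,
    sgn d i (S.erase i) * sgn d j ((S.erase i).erase j) *
      ∑ k : Fin d, ∑ l : Fin d,
        if 1 ≤ m l then
          let m' : Mi d := m + Finsupp.single k 1 - Finsupp.single l 1
          Riem d Γ i j k l x * ((m' k : ℕ) : ℝ) * a m' ((S.erase i).erase j) x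
        else 0

/-! ### Fiberwise-vector-field-valued one-forms and the Fedosov differential -/

/-- a fiberwise-vector-field-valued one-form `B = dx^k B^j_k(x,y) ∂/∂y^j`:
`B j k m x` is the coefficient of `dx^k y^m ∂/∂y^j` -/
abbrev VF1 (d : ℕ) := Fin d → Fin d → Mi d → (Fin d → ℝ) → ℝ

def SmoothVF1 (A : VF1 d) : Prop := ∀ j k m, ContDiff ℝ (⊤ : ℕ∞) (A j k m)

/-- all terms of `A` have `y`-degree at least 2 -/
def LowDegVanish (A : VF1 d) : Prop := ∀ j k m, ydeg d m < 2 → A j k m = 0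

/-- the action of a fiberwise-vector-field-valued one-form on `Ω` as an odd
derivation: `A·a = dx^k A^j_k(x,y) ∂a/∂y^j` -/
def vact (A : VF1 d) (a : Omega d) : Omega d := fun m S x =>
  ∑ k ∈ S, sgn d k (S.erase k) *
    ∑ j : Fin d, ∑ p ∈ Finset.HasAntidiagonal.antidiagonal m,
      A j k p.1 x * ((p.2 j : ℝ) + 1) * a (p.2 + Finsupp.single j 1) (S.erase k) x

/-- the `∂/∂y^j`-component of a fiberwise-vector-field-valued one-form,
as an element of `Ω` -/
def vf1ToOmega (A : VF1 d) (j : Fin d) : Omega d :=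
  fun m S x => ∑ k : Fin d, if S = {k} then A j k m x else 0

/-- the connection one-form `Γ = −dx^i Γ^k_{ij}(x) y^j ∂/∂y^k` as a
fiberwise-vector-field-valued one-form -/
def GammaVF (Γ : Christoffel d) : VF1 d := fun jf kx m x =>
  -∑ l : Fin d, if m = Finsupp.single l 1 then Γ jf kx l x else 0

/-- the `∂/∂y^k`-component of the curvature
`R = −(1/2) dx^i dx^j (R_{ij})^k_l y^l ∂/∂y^k`, as an element of `Ω` -/
def RVForm (Γ : Christoffel d) (kf : Fin d) : Omega d := fun m S x =>
  -(1/2 : ℝ) * ∑ i : Fin d, ∑ j : Fin d,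
    (if S = {i, j} ∧ i < j then (1 : ℝ) else if S = {i, j} ∧ j < i then -1 else 0) *
      ∑ l : Fin d, if m = Finsupp.single l 1 then Riem d Γ i j kf l x else 0

/-- the normalization `δ⁻¹ A = 0` (componentwise in the fibre index) -/
def DeltaInvVanish (A : VF1 d) : Prop := ∀ j, deltaInv d (vf1ToOmega d A j) = 0

/-- the Fedosov derivation `D = ∇ − δ + A·` -/
def Dfed (Γ : Christoffel d) (A : VF1 d) (a : Omega d) : Omega d :=
  nablaOp d Γ a - deltaOp d a + vact d A a

/-- nilpotency of the Fedosov derivation: `D ∘ D = 0` on `Ω` -/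
def Nilpotent (Γ : Christoffel d) (A : VF1 d) : Prop :=
  ∀ a : Omega d, Smooth d a → Dfed d Γ A (Dfed d Γ A a) = 0

/-- the fixed-point equation `A = δ⁻¹R + δ⁻¹(∇A + (1/2)[A,A])`, componentwise in
the fibre index `j`; here `(∇A)^j = dx^i ∂_{x^i}(A^j) + Γ·(A^j) + A·(Γ^j)` and
`((1/2)[A,A])^j = A·(A^j) = dx^k dx^l A^m_k ∂A^j_l/∂y^m`. -/
def FedosovFixedPoint (Γ : Christoffel d) (A : VF1 d) : Prop :=
  ∀ j, vf1ToOmega d A j =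
    deltaInv d (RVForm d Γ j) +
      deltaInv d (nablaOp d Γ (vf1ToOmega d A j) +
        vact d A (vf1ToOmega d (GammaVF d Γ) j) +
        vact d A (vf1ToOmega d A j))

/-! ### The supercommutative product on `Ω` -/

/-- sign of `dx^S ∧ dx^T = shuffleSgn S T • dx^{S ∪ T}` for disjoint `S`, `T` -/
def shuffleSgn (S T : Finset (Fin d)) : ℝ :=
  (-1 : ℝ) ^ ∑ i ∈ S, (T.filter (fun j => j < i)).card

/-- the supercommutative product of `Ω` -/
def mulOm (a b : Omega d) : Omega d := fun m S x =>
  ∑ T ∈ S.powerset, shuffleSgn d T (S \ T) *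
    ∑ p ∈ Finset.HasAntidiagonal.antidiagonal m, a p.1 T x * b p.2 (S \ T) x

/-- `a` is the flat section of the Fedosov differential extending `a₀`:
`a ∈ Ω⁰`, `Da = 0`, `σ(a) = a₀`. -/
def IsFlatSection (Γ : Christoffel d) (A : VF1 d) (a₀ : (Fin d → ℝ) → ℝ)
    (a : Omega d) : Prop :=
  ExtDeg d 0 a ∧ Smooth d a ∧ Dfed d Γ A a = 0 ∧ sigmaOm d a = a₀

/-!
Both `δ` and `∇` have the form `a ↦ dx^i P_i a`, where the operators `P_i` act on the fibre
power series coefficientwise in `dx`: `P_i = ∂/∂y^i` for `δ` and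
`P_i = ∂/∂x^i - Γ^k_{ij} y^j ∂/∂y^k` for `∇`. The anticommutator of two such operators is
`dx^i dx^j [P_i, Q_j]`, which vanishes as soon as `[P_i, Q_j]` is symmetric in `i, j`.
Here `[∂/∂y^i, ∂/∂x^j] = 0` and `[∂/∂y^i, Γ^k_{jl} y^l ∂/∂y^k] = Γ^k_{ji} ∂/∂y^k`, which is
symmetric because `Γ` is torsion-free.
-/

open MvPowerSeries

variable {d}

theorem sgn_erase_self (i : Fin d) (S : Finset (Fin d)) : sgn d i (S.erase i) = sgn d i S := by
  rw [sgn, sgn, Finset.filter_erase, Finset.erase_eq_of_notMem (by simp)]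

theorem sgn_erase_of_mem {i j : Fin d} {S : Finset (Fin d)} (hi : i ∈ S) :
    sgn d j (S.erase i) = (if i < j then -1 else 1) * sgn d j S := by
  rw [sgn, sgn, Finset.filter_erase]
  split_ifs with hlt
  · rw [← Finset.card_erase_add_one (Finset.mem_filter.2 ⟨hi, hlt⟩), pow_succ]
    ring
  · rw [Finset.erase_eq_of_notMem (by simp [hlt]), one_mul]

/-- `dx^i dx^j dx^{S \ {i, j}} = pairSgn S i j • dx^S`. -/
def pairSgn (S : Finset (Fin d)) (i j : Fin d) : ℝ :=
  sgn d i (S.erase i) * sgn d j ((S.erase i).erase j)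

theorem pairSgn_swap {S : Finset (Fin d)} {i j : Fin d} (hi : i ∈ S) (hj : j ∈ S) (hij : i ≠ j) :
    pairSgn S j i = -pairSgn S i j := by
  simp only [pairSgn, sgn_erase_self, sgn_erase_of_mem hi, sgn_erase_of_mem hj]
  rcases hij.lt_or_gt with h | h <;> simp [h, h.not_gt] <;> ring

section PairSums

variable {α M : Type*} [DecidableEq α]

theorem sum_sum_erase_comm [AddCommMonoid M] (S : Finset α) (f : α → α → M) :
    ∑ i ∈ S, ∑ j ∈ S.erase i, f i j = ∑ j ∈ S, ∑ i ∈ S.erase j, f i j :=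
  Finset.sum_comm' fun i j => by simp only [Finset.mem_erase]; tauto

theorem sum_sum_erase_eq_zero_of_antisymm [AddCommGroup M] [Module ℝ M] (S : Finset α)
    (f : α → α → M) (hf : ∀ i ∈ S, ∀ j ∈ S, i ≠ j → f j i = -f i j) :
    ∑ i ∈ S, ∑ j ∈ S.erase i, f i j = 0 := by
  have hs : ∑ i ∈ S, ∑ j ∈ S.erase i, f i j = -∑ i ∈ S, ∑ j ∈ S.erase i, f i j := by
    conv_lhs => rw [sum_sum_erase_comm]
    simp only [← Finset.sum_neg_distrib]
    refine Finset.sum_congr rfl fun j hj => Finset.sum_congr rfl fun i hi => ?_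
    exact hf j hj i (Finset.mem_of_mem_erase hi) (Finset.ne_of_mem_erase hi).symm
  rw [eq_neg_iff_add_eq_zero, ← two_smul ℝ] at hs
  exact (smul_eq_zero.1 hs).resolve_left two_ne_zero

end PairSums

section Wedge

variable {V W : Type*} [AddCommGroup V] [Module ℝ V] [AddCommGroup W] [Module ℝ W]

/-- The operator `dx^i P_i` on `V`-valued forms, a form being given by its `dx^S`-coefficients. -/
def wedge (P : Fin d → V → V) (a : Finset (Fin d) → V) : Finset (Fin d) → V :=
  fun S => ∑ i ∈ S, sgn d i (S.erase i) • P i (a (S.erase i))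

theorem wedge_sub (P : Fin d → Module.End ℝ V) (a b : Finset (Fin d) → V) :
    wedge (P ·) (a - b) = wedge (P ·) a - wedge (P ·) b := by
  funext S
  simp [wedge, smul_sub, Finset.sum_sub_distrib]

theorem map_wedge (f : W →ₗ[ℝ] V) {P : Fin d → W → W} {P' : Fin d → V → V}
    (h : ∀ i w, f (P i w) = P' i (f w)) (a : Finset (Fin d) → W) :
    f ∘ wedge P a = wedge P' (f ∘ a) := by
  funext S
  simp [wedge, h]

theorem wedge_wedge_apply (P : Fin d → Module.End ℝ V) (Q : Fin d → V → V)
    (a : Finset (Fin d) → V) (S : Finset (Fin d)) :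
    wedge (P ·) (wedge Q a) S =
      ∑ i ∈ S, ∑ j ∈ S.erase i, pairSgn S i j • P i (Q j (a ((S.erase i).erase j))) := by
  simp [wedge, pairSgn, Finset.smul_sum, smul_smul]

theorem wedge_anticomm (P Q : Fin d → Module.End ℝ V) (h : ∀ i j, ⁅P i, Q j⁆ = ⁅P j, Q i⁆)
    (a : Finset (Fin d) → V) :
    wedge (P ·) (wedge (Q ·) a) + wedge (Q ·) (wedge (P ·) a) = 0 := by
  funext S
  have hpair : ∀ i ∈ S, ∀ j ∈ S.erase i,
      pairSgn S i j • P i (Q j (a ((S.erase i).erase j)))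
        + pairSgn S j i • Q j (P i (a ((S.erase j).erase i)))
        = pairSgn S i j • ⁅P i, Q j⁆ (a ((S.erase i).erase j)) := by
    intro i hi j hj
    rw [Finset.erase_right_comm, pairSgn_swap hi (Finset.mem_of_mem_erase hj)
      (Finset.ne_of_mem_erase hj).symm, Ring.lie_def, neg_smul, ← sub_eq_add_neg, ← smul_sub]
    rfl
  calc wedge (P ·) (wedge (Q ·) a) S + wedge (Q ·) (wedge (P ·) a) S
      = ∑ i ∈ S, ∑ j ∈ S.erase i, pairSgn S i j • ⁅P i, Q j⁆ (a ((S.erase i).erase j)) := by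
        rw [wedge_wedge_apply, wedge_wedge_apply,
          sum_sum_erase_comm S fun i j => pairSgn S i j • Q i (P j (a ((S.erase i).erase j))),
          ← Finset.sum_add_distrib]
        refine Finset.sum_congr rfl fun i hi => ?_
        rw [← Finset.sum_add_distrib]
        exact Finset.sum_congr rfl (hpair i hi)
    _ = 0 := sum_sum_erase_eq_zero_of_antisymm S _ fun i hi j hj hij => by
        rw [h, Finset.erase_right_comm, pairSgn_swap hi hj hij, neg_smul]

end Wedge

/-- `a : Omega d` is encoded by its `dx^S`-coefficients `slices a S`, power series in the fibre
variables `y` whose coefficients are functions of `x`. -/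
abbrev Series (d : ℕ) := MvPowerSeries (Fin d) ((Fin d → ℝ) → ℝ)

def slices (a : Omega d) : Finset (Fin d) → Series d := fun S m => a m S

theorem coeff_slices (a : Omega d) (S : Finset (Fin d)) (m : Mi d) :
    coeff m (slices a S) = a m S :=
  rfl

theorem slices_injective : Function.Injective (slices (d := d)) := fun a b h => by
  funext m S
  exact congrFun (congrFun h S) m

theorem slices_add (a b : Omega d) : slices (a + b) = slices a + slices b := rfl

theorem slices_zero : slices (0 : Omega d) = 0 := rfl

def dy (i : Fin d) : Module.End ℝ (Series d) :=
  (pderiv _ i).toLinearMap.restrictScalars ℝ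

theorem coeff_dy (i : Fin d) (f : Series d) (m : Mi d) :
    coeff m (dy i f) = ((m i : ℝ) + 1) • coeff (m + Finsupp.single i 1) f := by
  change coeff m (pderiv _ i f) = _
  rw [coeff_pderiv]
  funext x
  simp [mul_comm]

theorem slices_deltaOp (a : Omega d) : slices (deltaOp d a) = wedge (dy ·) (slices a) := by
  funext S
  ext m x
  simp only [coeff_slices, deltaOp, wedge, map_sum, LinearMap.map_smul_of_tower, coeff_dy,
    Finset.sum_apply, Pi.smul_apply, smul_eq_mul]
  exact Finset.sum_congr rfl fun i _ => by ring

theorem lie_dy_dy (i j : Fin d) : ⁅dy i, dy j⁆ = 0 := by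
  ext f m : 2
  rw [Ring.lie_def, LinearMap.sub_apply, map_sub, Module.End.mul_apply, Module.End.mul_apply,
    coeff_dy, coeff_dy, coeff_dy, coeff_dy, add_right_comm, LinearMap.zero_apply, map_zero]
  rcases eq_or_ne i j with rfl | hij
  · exact sub_self _
  · simp only [Finsupp.add_apply, Finsupp.single_eq_of_ne hij, Finsupp.single_eq_of_ne hij.symm,
      add_zero, smul_comm ((m i : ℝ) + 1), sub_self]

theorem lie_dy_mulLeft (i : Fin d) (g : Series d) :
    ⁅dy i, LinearMap.mulLeft ℝ g⁆ = LinearMap.mulLeft ℝ (pderiv _ i g) := by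
  ext f : 1
  simp [Ring.lie_def, dy, Derivation.leibniz, mul_comm]

/-- `Γ^k_{ij} y^j ∂/∂y^k`, so that `∇ = dx^i (∂/∂x^i - conn Γ i)`. -/
def conn (Γ : Christoffel d) (i : Fin d) : Module.End ℝ (Series d) :=
  ∑ j, ∑ k, LinearMap.mulLeft ℝ (C (Γ k i j) * X j) * dy k

theorem lie_dy_conn (Γ : Christoffel d) (i j : Fin d) :
    ⁅dy i, conn Γ j⁆ = ∑ k, LinearMap.mulLeft ℝ (C (Γ k j i)) * dy k := by
  have bracket_sum : ∀ {ι : Type} (s : Finset ι) (A : ι → Module.End ℝ (Series d)),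
      ⁅dy i, ∑ x ∈ s, A x⁆ = ∑ x ∈ s, ⁅dy i, A x⁆ := fun s A => by
    simp only [Ring.lie_def, Finset.mul_sum, Finset.sum_mul, Finset.sum_sub_distrib]
  have bracket_mul : ∀ A B : Module.End ℝ (Series d),
      ⁅dy i, A * B⁆ = ⁅dy i, A⁆ * B + A * ⁅dy i, B⁆ :=
    fun A B => by simp only [Ring.lie_def, mul_sub, sub_mul, mul_assoc]; abel
  simp only [conn, bracket_sum, bracket_mul, lie_dy_mulLeft, lie_dy_dy, mul_zero, add_zero]
  classical
  simp [Derivation.leibniz, pderiv_X, Pi.single_apply, apply_ite (LinearMap.mulLeft ℝ), ite_mul]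

theorem lie_dy_conn_swap {Γ : Christoffel d} (hΓ : TorsionFree d Γ) (i j : Fin d) :
    ⁅dy i, conn Γ j⁆ = ⁅dy j, conn Γ i⁆ := by
  simp only [lie_dy_conn, hΓ _ i j]

theorem coeff_X_mul_dy (j k : Fin d) (f : Series d) (m : Mi d) :
    coeff m (X j * dy k f) =
      if 1 ≤ m j then
        (((m + Finsupp.single k 1 - Finsupp.single j 1 : Mi d) k : ℕ) : ℝ) •
          coeff (m + Finsupp.single k 1 - Finsupp.single j 1) f
      else 0 := by
  simp only [X, coeff_monomial_mul, Finsupp.single_le_iff, one_mul]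
  split_ifs with hj
  · have hm : m - Finsupp.single j 1 + Finsupp.single k 1 =
        m + Finsupp.single k 1 - Finsupp.single j 1 :=
      tsub_add_eq_add_tsub (Finsupp.single_le_iff.2 hj)
    have hk : (m + Finsupp.single k 1 - Finsupp.single j 1 : Mi d) k =
        (m - Finsupp.single j 1 : Mi d) k + 1 := by
      rw [← hm, Finsupp.add_apply, Finsupp.single_eq_same]
    rw [coeff_dy, hm, hk, Nat.cast_succ]
  · rfl

def dx (i : Fin d) (f : Series d) : Series d := fun m => pd d i (coeff m f)

theorem coeff_dx (i : Fin d) (f : Series d) (m : Mi d) : coeff m (dx i f) = pd d i (coeff m f) :=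
  rfl

theorem slices_nablaOp (Γ : Christoffel d) (a : Omega d) :
    slices (nablaOp d Γ a) = wedge dx (slices a) - wedge (conn Γ ·) (slices a) := by
  funext S
  ext m x
  simp only [coeff_slices, nablaOp, wedge, Pi.sub_apply, ← Finset.sum_sub_distrib, ← smul_sub,
    map_sum, LinearMap.map_smul_of_tower, map_sub, conn, LinearMap.sum_apply, Finset.sum_apply,
    Module.End.mul_apply, LinearMap.mulLeft_apply, mul_assoc, coeff_C_mul, coeff_X_mul_dy, coeff_dx,
    Pi.smul_apply, Pi.mul_apply, smul_eq_mul, ite_apply, Pi.zero_apply, mul_ite, mul_zero]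

/-- `∂/∂x^i` is additive only on differentiable coefficients, so the `x`-derivatives are
treated as operators on this submodule. -/
def smoothSeries : Submodule ℝ (Series d) where
  carrier := {f | ∀ m, ContDiff ℝ (⊤ : ℕ∞) (coeff m f)}
  add_mem' hf hg m := by rw [map_add]; exact (hf m).add (hg m)
  zero_mem' m := by rw [map_zero]; exact contDiff_const
  smul_mem' c f hf m := by rw [LinearMap.map_smul_of_tower]; exact (hf m).const_smul c

theorem contDiff_pd {f : (Fin d → ℝ) → ℝ} (hf : ContDiff ℝ (⊤ : ℕ∞) f) (i : Fin d) :
    ContDiff ℝ (⊤ : ℕ∞) (pd d i f) :=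
  (contDiff_infty_iff_fderiv.1 hf).2.clm_apply contDiff_const

theorem pd_add {f g : (Fin d → ℝ) → ℝ} (hf : Differentiable ℝ f) (hg : Differentiable ℝ g)
    (i : Fin d) : pd d i (f + g) = pd d i f + pd d i g := by
  funext x
  simp [pd, fderiv_add (hf x) (hg x)]

theorem pd_const_smul (c : ℝ) {f : (Fin d → ℝ) → ℝ} (hf : Differentiable ℝ f) (i : Fin d) :
    pd d i (c • f) = c • pd d i f := by
  funext x
  simp [pd, fderiv_const_smul (hf x)]

theorem dy_mem_smoothSeries (i : Fin d) {f : Series d} (hf : f ∈ smoothSeries) :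
    dy i f ∈ smoothSeries := fun m => by
  rw [coeff_dy]
  exact (hf _).const_smul ((m i : ℝ) + 1)

def dyS (i : Fin d) : Module.End ℝ (smoothSeries (d := d)) :=
  (dy i).restrict fun _ => dy_mem_smoothSeries i

def dxS (i : Fin d) : Module.End ℝ (smoothSeries (d := d)) where
  toFun f := ⟨dx i f, fun m => contDiff_pd (f.2 m) i⟩
  map_add' f g := by
    ext m : 2
    simp only [Submodule.coe_add, coeff_dx, map_add]
    exact pd_add ((f.2 m).differentiable (by simp)) ((g.2 m).differentiable (by simp)) i
  map_smul' c f := by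
    ext m : 2
    simp only [SetLike.val_smul, coeff_dx, LinearMap.map_smul_of_tower, RingHom.id_apply]
    exact pd_const_smul c ((f.2 m).differentiable (by simp)) i

theorem lie_dyS_dxS (i j : Fin d) : ⁅dyS i, dxS j⁆ = 0 := by
  ext f m : 3
  have hf := (f.2 (m + Finsupp.single i 1)).differentiable (by simp)
  simp only [Ring.lie_def, LinearMap.sub_apply, Module.End.mul_apply, Submodule.coe_sub, map_sub,
    LinearMap.zero_apply, ZeroMemClass.coe_zero, map_zero, dyS, dxS, LinearMap.coe_restrict_apply,
    LinearMap.coe_mk, AddHom.coe_mk, coeff_dy, coeff_dx, pd_const_smul _ hf, sub_self]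

theorem wedge_dy_dx_anticomm (A : Finset (Fin d) → Series d) (hA : ∀ S, A S ∈ smoothSeries) :
    wedge (dy ·) (wedge dx A) + wedge dx (wedge (dy ·) A) = 0 := by
  obtain ⟨B, rfl⟩ : ∃ B : Finset (Fin d) → smoothSeries (d := d), A = smoothSeries.subtype ∘ B :=
    ⟨fun S => ⟨A S, hA S⟩, rfl⟩
  have hy : ∀ B : Finset (Fin d) → smoothSeries (d := d),
      wedge (dy ·) (smoothSeries.subtype ∘ B) = smoothSeries.subtype ∘ wedge (dyS ·) B :=
    fun B => (map_wedge smoothSeries.subtype (P := (dyS ·)) (fun _ _ => rfl) B).symm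
  have hx : ∀ B : Finset (Fin d) → smoothSeries (d := d),
      wedge dx (smoothSeries.subtype ∘ B) = smoothSeries.subtype ∘ wedge (dxS ·) B :=
    fun B => (map_wedge smoothSeries.subtype (P := (dxS ·)) (fun _ _ => rfl) B).symm
  have hB := wedge_anticomm dyS dxS (fun i j => by rw [lie_dyS_dxS, lie_dyS_dxS]) B
  rw [hx, hy, hy, hx]
  funext S
  simpa using congrArg (fun F => (F S : Series d)) hB

theorem delta_nabla_anticommute_general (d : ℕ) (Γ : Christoffel d) (hsym : TorsionFree d Γ) :
    ∀ a : Omega d, Smooth d a →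
      deltaOp d (nablaOp d Γ a) + nablaOp d Γ (deltaOp d a) = 0 := by
  intro a ha
  apply slices_injective
  have hx := wedge_dy_dx_anticomm (slices a) fun S m => ha m S
  have hconn := wedge_anticomm dy (conn Γ) (lie_dy_conn_swap hsym) (slices a)
  rw [slices_add, slices_deltaOp, slices_nablaOp, slices_nablaOp, slices_deltaOp, wedge_sub,
    slices_zero]
  linear_combination (norm := abel) hx - hconn

/-- For any torsion-free Christoffel symbols `Γ^k_{ij}` (smooth
and symmetric in the lower indices `i`, `j`), the derivations `δ` and `∇` on `Ω`
anticommute: `δ∇ + ∇δ = 0`. -/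
theorem delta_nabla_anticommute (d : ℕ) (hd : 1 ≤ d) (Γ : Christoffel d)
    (hΓ : SmoothGamma d Γ) (hsym : TorsionFree d Γ) :
    ∀ a : Omega d, Smooth d a →
      deltaOp d (nablaOp d Γ a) + nablaOp d Γ (deltaOp d a) = 0 :=
  delta_nabla_anticommute_general d Γ hsym
end FedosovModel
end
end

section
/- (Uniqueness/fixed-point lemma.) Let A be a fiberwise-vector-field-valued one-form all of whose terms have y-degree ≥ 2. If h ∈ Ω satisfies h = δ^{-1}(∇h + A·h), then h = 0. -/
/-!
Coordinate model of the Fedosov resolution on `M = ℝ^d`, following Dolgushev,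
"Covariant and equivariant formality theorems".

An element `a : Omega d` represents the exterior form with values in the formally
completed symmetric algebra of the cotangent bundle,
`a = ∑ a_{m,S}(x) y^m dx^S`, where `m` is the multi-index of exponents of the
commuting formal fibre variables `y^1, …, y^d` and `S` is the (increasingly
ordered) set of indices of the anticommuting `dx`'s; `a m S : (Fin d → ℝ) → ℝ`
is the corresponding (smooth) coefficient.
-/

noncomputable section
open scoped BigOperators

namespace FedosovModel

variable (d : ℕ)

/-!
`δ⁻¹` raises the `y`-degree by one, `∇` preserves it, and `A·` does not lower it because every
term of `A` has `y`-degree at least `2`. Hence `h ↦ δ⁻¹(∇h + A·h)` maps the elements vanishing in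
`y`-degrees `< n` to those vanishing in `y`-degrees `< n + 1`, and induction on `n` shows that a
fixed point vanishes in every `y`-degree.
-/

section Filtration

variable {d}

lemma ydeg_eq_degree (m : Mi d) : ydeg d m = m.degree :=
  (Finsupp.degree_eq_sum m).symm

@[simp]
lemma ydeg_add (m m' : Mi d) : ydeg d (m + m') = ydeg d m + ydeg d m' := by
  simp only [ydeg_eq_degree, map_add]

@[simp]
lemma ydeg_single (j : Fin d) : ydeg d (Finsupp.single j 1) = 1 := by
  rw [ydeg_eq_degree, Finsupp.degree_single]

lemma ydeg_sub_single_add_one {m : Mi d} {j : Fin d} (hj : 1 ≤ m j) :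
    ydeg d (m - Finsupp.single j 1) + 1 = ydeg d m := by
  conv_rhs => rw [← tsub_add_cancel_of_le (Finsupp.single_le_iff.mpr hj)]
  rw [ydeg_add, ydeg_single]

def VanishesBelow (n : ℕ) (a : Omega d) : Prop := ∀ m S, ydeg d m < n → a m S = 0

lemma VanishesBelow.add {n : ℕ} {a b : Omega d} (ha : VanishesBelow n a)
    (hb : VanishesBelow n b) : VanishesBelow n (a + b) := fun m S hm => by
  simp only [Pi.add_apply, ha m S hm, hb m S hm, add_zero]

lemma VanishesBelow.mono {k n : ℕ} {a : Omega d} (hkn : k ≤ n) (ha : VanishesBelow n a) :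
    VanishesBelow k a := fun m S hm => ha m S (lt_of_lt_of_le hm hkn)

lemma eq_zero_of_forall_vanishesBelow {a : Omega d} (ha : ∀ n, VanishesBelow n a) : a = 0 :=
  funext fun m => funext fun S => ha (ydeg d m + 1) m S (Nat.lt_succ_self _)

lemma deltaInv_vanishesBelow {n : ℕ} {a : Omega d} (ha : VanishesBelow n a) :
    VanishesBelow (n + 1) (deltaInv d a) := by
  intro m S hm
  funext x
  refine mul_eq_zero_of_right _ (Finset.sum_eq_zero fun k _ => ?_)
  split_ifs with hk
  · have hdeg := ydeg_sub_single_add_one hk.2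
    rw [ha _ _ (by omega), Pi.zero_apply, mul_zero]
  · rfl

lemma nablaOp_vanishesBelow (Γ : Christoffel d) {n : ℕ} {a : Omega d}
    (ha : VanishesBelow n a) : VanishesBelow n (nablaOp d Γ a) := by
  intro m S hm
  funext x
  refine Finset.sum_eq_zero fun i _ => mul_eq_zero_of_right _ ?_
  have hpd : pd d i (a m (S.erase i)) x = 0 := by
    simp only [pd, ha m _ hm, fderiv_zero, Pi.zero_apply, zero_apply]
  rw [hpd, zero_sub, neg_eq_zero]
  refine Finset.sum_eq_zero fun j _ => Finset.sum_eq_zero fun k _ => ?_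
  split_ifs with hj
  · -- the Christoffel term trades one `y^j` for one `y^k`, keeping the `y`-degree
    have hjk : 1 ≤ (m + Finsupp.single k 1 : Mi d) j := by
      rw [Finsupp.add_apply]; omega
    have hdeg := ydeg_sub_single_add_one hjk
    rw [ydeg_add, ydeg_single] at hdeg
    exact mul_eq_zero_of_right _ (congrFun (ha _ _ (by omega)) x)
  · rfl

lemma vact_vanishesBelow {A : VF1 d} (hA : LowDegVanish d A) {n : ℕ} {a : Omega d}
    (ha : VanishesBelow n a) : VanishesBelow (n + 1) (vact d A a) := by
  intro m S hm
  funext x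
  refine Finset.sum_eq_zero fun k _ => mul_eq_zero_of_right _ ?_
  refine Finset.sum_eq_zero fun j _ => Finset.sum_eq_zero fun p hp => ?_
  rcases lt_or_ge (ydeg d p.1) 2 with hp1 | hp1
  · rw [hA j k p.1 hp1, Pi.zero_apply, zero_mul, zero_mul]
  · have hsum : ydeg d p.1 + ydeg d p.2 = ydeg d m := by
      rw [← ydeg_add, Finset.HasAntidiagonal.mem_antidiagonal.mp hp]
    have hlt : ydeg d (p.2 + Finsupp.single j 1) < n := by
      rw [ydeg_add, ydeg_single]; omega
    rw [ha _ _ hlt, Pi.zero_apply, mul_zero]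

end Filtration

theorem fixed_point_lemma_general (d : ℕ) (Γ : Christoffel d)
    (A : VF1 d) (hlow : LowDegVanish d A)
    (h : Omega d)
    (hfix : h = deltaInv d (nablaOp d Γ h + vact d A h)) :
    h = 0 := by
  refine eq_zero_of_forall_vanishesBelow fun n => ?_
  induction n with
  | zero => exact fun m S hm => absurd hm (Nat.not_lt_zero _)
  | succ n ih =>
    rw [hfix]
    exact deltaInv_vanishesBelow
      ((nablaOp_vanishesBelow Γ ih).add ((vact_vanishesBelow hlow ih).mono n.le_succ))

/-- Uniqueness/fixed-point lemma. Let `A` be a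
fiberwise-vector-field-valued one-form all of whose terms have `y`-degree `≥ 2`.
If `h ∈ Ω` satisfies `h = δ⁻¹(∇h + A·h)`, then `h = 0`. -/
theorem fixed_point_lemma (d : ℕ) (hd : 1 ≤ d) (Γ : Christoffel d)
    (hΓ : SmoothGamma d Γ) (hsym : TorsionFree d Γ)
    (A : VF1 d) (hA : SmoothVF1 d A) (hlow : LowDegVanish d A)
    (h : Omega d) (hsm : Smooth d h)
    (hfix : h = deltaInv d (nablaOp d Γ h + vact d A h)) :
    h = 0 :=
  fixed_point_lemma_general d Γ A hlow h hfix
end FedosovModel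
end
end
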